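/- Let (X, F_i) satisfy (K_d) on ℙⁿ and suppose X contains no line, with resolved morphism φ̃: Bl_X ℙⁿ → ℙˢ. Then for each point a in the image of φ̃, the fiber φ̃⁻¹(a) maps isomorphically under the blow-down to a linear subspace ℙᵏ ⊆ ℙⁿ, and either k = 0 or ℙᵏ ∩ X is a degree-d hypersurface in ℙᵏ. -/

import Mathlib

/-!
STATEMENT 9: Let `(X, F_i)` satisfy `(K_d)` on `ℙⁿ` (forms `F₀, …, F_{m-1}` of degree
`d`), suppose `X` contains no line, and let `φ̃ : Bl_X ℙⁿ → ℙ^{m-1}` be the resolved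
morphism.  Then for each point `a` in the image of `φ̃`, the fiber `φ̃⁻¹(a)` maps
isomorphically under the blow-down to a linear subspace `ℙᵏ ⊆ ℙⁿ`, and either `k = 0`
or `ℙᵏ ∩ X` is a degree-`d` hypersurface in `ℙᵏ`.

Encoding: `Bl_X ℙⁿ` is realized as the closure `Γ̄` of the graph of
`φ = [F₀ : … : F_{m-1}]` in `ℙⁿ × ℙ^{m-1}`, and `φ̃` as the second projection; the fiber
over `a` is `{p ∈ Γ̄ | p.2 = a}`.  The conclusion says this fiber is
`ℙ(column span of A) × {a}` for an injective matrix `A : ℂ^{k+1} → ℂ^{n+1}` (so the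
blow-down, the first projection, maps it bijectively — isomorphically — onto a linear
`ℙᵏ`), and either `k = 0` or the restrictions of all `F i` to `ℙᵏ` are scalar multiples
of one common nonzero degree-`d` form `G`, i.e. `ℙᵏ ∩ X` is the degree-`d` hypersurface
`{G = 0} ⊂ ℙᵏ`. -/

open MvPolynomial

variable {n m d : ℕ}

def LinearSyzygies (F : Fin m → MvPolynomial (Fin (n + 1)) ℂ) :
    Set (Fin m → MvPolynomial (Fin (n + 1)) ℂ) :=
  {a | (∀ i, (a i).IsHomogeneous 1) ∧ ∑ i, a i * F i = 0}

def SatisfiesK (F : Fin m → MvPolynomial (Fin (n + 1)) ℂ) : Prop :=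
  ∀ i j : Fin m,
    (Pi.single i (F j) - Pi.single j (F i)) ∈
      Submodule.span (MvPolynomial (Fin (n + 1)) ℂ) (LinearSyzygies F)

noncomputable def Phi (F : Fin m → MvPolynomial (Fin (n + 1)) ℂ)
    (z : Fin (n + 1) → ℂ) : Fin m → ℂ :=
  fun i => MvPolynomial.eval z (F i)

def coneX (F : Fin m → MvPolynomial (Fin (n + 1)) ℂ) : Set (Fin (n + 1) → ℂ) :=
  {z | ∀ i, MvPolynomial.eval z (F i) = 0}

def ContainsNoLine (F : Fin m → MvPolynomial (Fin (n + 1)) ℂ) : Prop :=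
  ¬∃ A : Matrix (Fin (n + 1)) (Fin 2) ℂ, Function.Injective A.mulVec ∧
    ∀ w : Fin 2 → ℂ, A.mulVec w ∈ coneX F

noncomputable def restrictTo {k : ℕ} (A : Matrix (Fin (n + 1)) (Fin k) ℂ)
    (G : MvPolynomial (Fin (n + 1)) ℂ) : MvPolynomial (Fin k) ℂ :=
  MvPolynomial.aeval (fun j => ∑ b, MvPolynomial.C (A j b) * MvPolynomial.X b) G


/-- The quotient topology on a projectivization (Mathlib does not provide this
instance). -/
instance {K V : Type*} [DivisionRing K] [AddCommGroup V] [Module K V]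
    [TopologicalSpace V] : TopologicalSpace (Projectivization K V) :=
  instTopologicalSpaceQuotient

/-- The closure of the graph of `φ` in `ℙⁿ × ℙ^{m-1}`, i.e. the blow-up `Bl_X ℙⁿ`. -/
noncomputable def graphClosure (F : Fin m → MvPolynomial (Fin (n + 1)) ℂ) :
    Set (Projectivization ℂ (Fin (n + 1) → ℂ) × Projectivization ℂ (Fin m → ℂ)) :=
  closure {p | ∃ (z : Fin (n + 1) → ℂ) (hz : z ≠ 0) (hp : Phi F z ≠ 0),
    p = (Projectivization.mk ℂ z hz, Projectivization.mk ℂ (Phi F z) hp)}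

/-! ### Auxiliary material -/

section Aux

open Topology

/-- A degree-`1` Finsupp is a single. -/
lemma Finsupp.eq_single_of_degree_one' {σ : Type*} [DecidableEq σ] {v : σ →₀ ℕ}
    (hv : Finsupp.degree v = 1) : ∃ i, v = Finsupp.single i 1 := by
  have hne : v ≠ 0 := by
    intro h
    rw [h] at hv; simp at hv
  obtain ⟨i, hi⟩ := Finsupp.ne_iff.mp hne
  simp only [Finsupp.coe_zero, Pi.zero_apply] at hi
  have h1 : v i ≤ 1 := hv ▸ Finsupp.le_degree i v
  have hvi : v i = 1 := le_antisymm h1 (Nat.one_le_iff_ne_zero.mpr hi)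
  refine ⟨i, ?_⟩
  ext j
  rcases eq_or_ne j i with rfl | hj
  · simp [hvi]
  · rw [Finsupp.single_apply, if_neg (show ¬ i = j from fun h => hj h.symm)]
    by_contra hj0
    have hjs : j ∈ v.support := Finsupp.mem_support_iff.mpr hj0
    have his : i ∈ v.support := Finsupp.mem_support_iff.mpr hi
    have : 2 ≤ Finsupp.degree v := by
      rw [Finsupp.degree]
      calc 2 = 1 + 1 := rfl
      _ ≤ v i + v j := Nat.add_le_add (hvi.ge) (Nat.one_le_iff_ne_zero.mpr hj0)
      _ ≤ ∑ k ∈ v.support, v k :=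
        Finset.add_le_sum (f := fun k => v k) (fun _ _ => Nat.zero_le _) his hjs
          (fun h => hj h.symm)
    omega

/-- Evaluation of a degree-one homogeneous polynomial is a linear expression. -/
lemma eval_isHomogeneous_one {N : ℕ} {p : MvPolynomial (Fin N) ℂ}
    (hp : p.IsHomogeneous 1) (z : Fin N → ℂ) :
    eval z p = ∑ i, coeff (Finsupp.single i 1) p * z i := by
  conv_lhs => rw [p.as_sum, map_sum]
  rw [show (∑ v ∈ p.support, eval z (monomial v (coeff v p)))
      = ∑ v ∈ Finset.univ.image (fun i : Fin N => Finsupp.single i 1),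
          eval z (monomial v (coeff v p)) from ?_]
  · rw [Finset.sum_image (by
      intro i _ j _ h
      classical
      have := DFunLike.congr_fun h i
      simp [Finsupp.single_apply] at this
      by_contra hij
      exact hij this.symm)]
    apply Finset.sum_congr rfl
    intro i _
    rw [eval_monomial, Finsupp.prod_single_index (by simp)]
    simp [mul_comm]
  · apply Finset.sum_subset
    · intro v hv
      have hd : Finsupp.degree v = 1 := by
        rw [Finsupp.degree_eq_weight_one]
        exact hp (mem_support_iff.mp hv)
      obtain ⟨i, rfl⟩ := Finsupp.eq_single_of_degree_one' hd
      exact Finset.mem_image.mpr ⟨i, Finset.mem_univ i, rfl⟩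
    · intro v _ hv
      rw [notMem_support_iff.mp hv]
      simp

lemma eval_add_one {N : ℕ} {p : MvPolynomial (Fin N) ℂ} (hp : p.IsHomogeneous 1)
    (x y : Fin N → ℂ) : eval (x + y) p = eval x p + eval y p := by
  simp only [eval_isHomogeneous_one hp, Pi.add_apply, mul_add, Finset.sum_add_distrib]

lemma eval_smul_one {N : ℕ} {p : MvPolynomial (Fin N) ℂ} (hp : p.IsHomogeneous 1)
    (c : ℂ) (x : Fin N → ℂ) : eval (c • x) p = c * eval x p := by
  simp only [eval_isHomogeneous_one hp, Pi.smul_apply, smul_eq_mul, Finset.mul_sum]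
  apply Finset.sum_congr rfl; intros; ring

/-- The linear space `W_a` cut out by the linear syzygies paired with `a`. -/
noncomputable def Wsub (F : Fin m → MvPolynomial (Fin (n + 1)) ℂ) (a : Fin m → ℂ) :
    Submodule ℂ (Fin (n + 1) → ℂ) where
  carrier := {z | ∀ ℓ ∈ LinearSyzygies F, ∑ i, eval z (ℓ i) * a i = 0}
  add_mem' := by
    intro x y hx hy ℓ hℓ
    simp only [Set.mem_setOf_eq] at *
    calc ∑ i, eval (x + y) (ℓ i) * a i
        = ∑ i, (eval x (ℓ i) * a i + eval y (ℓ i) * a i) := by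
          apply Finset.sum_congr rfl; intro i _
          rw [eval_add_one (hℓ.1 i)]; ring
      _ = 0 := by rw [Finset.sum_add_distrib, hx ℓ hℓ, hy ℓ hℓ, add_zero]
  zero_mem' := by
    intro ℓ hℓ
    apply Finset.sum_eq_zero
    intro i _
    have h0 := eval_smul_one (hℓ.1 i) 0 0
    simp only [zero_smul, zero_mul] at h0
    rw [h0, zero_mul]
  smul_mem' := by
    intro c x hx ℓ hℓ
    simp only [Set.mem_setOf_eq] at *
    calc ∑ i, eval (c • x) (ℓ i) * a i = c * ∑ i, eval x (ℓ i) * a i := by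
          rw [Finset.mul_sum]
          apply Finset.sum_congr rfl; intro i _
          rw [eval_smul_one (hℓ.1 i)]; ring
      _ = 0 := by rw [hx ℓ hℓ, mul_zero]

/-- The key consequence of `(K_d)`: on `W_a`, the vector `F(z)` is proportional to `a`. -/
lemma key_prop {F : Fin m → MvPolynomial (Fin (n + 1)) ℂ} (hK : SatisfiesK F)
    {a : Fin m → ℂ} {z : Fin (n + 1) → ℂ} (hz : z ∈ Wsub F a) (i j : Fin m) :
    eval z (F j) * a i = eval z (F i) * a j := by
  classical
  set M : Submodule (MvPolynomial (Fin (n + 1)) ℂ) (Fin m → MvPolynomial (Fin (n + 1)) ℂ) :=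
    { carrier := {v | ∑ k, eval z (v k) * a k = 0}
      add_mem' := by
        intro x y hx hy
        simp only [Set.mem_setOf_eq, Pi.add_apply, map_add] at *
        rw [show ∑ k, (eval z (x k) + eval z (y k)) * a k
            = (∑ k, eval z (x k) * a k) + ∑ k, eval z (y k) * a k by
          rw [← Finset.sum_add_distrib]; apply Finset.sum_congr rfl; intros; ring, hx, hy,
          add_zero]
      zero_mem' := by simp
      smul_mem' := by
        intro c x hx
        simp only [Set.mem_setOf_eq, Pi.smul_apply, smul_eq_mul, map_mul] at *
        rw [show ∑ k, eval z c * eval z (x k) * a k = eval z c * ∑ k, eval z (x k) * a k by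
          rw [Finset.mul_sum]; apply Finset.sum_congr rfl; intros; ring, hx, mul_zero] }
  have hsub : Submodule.span (MvPolynomial (Fin (n + 1)) ℂ) (LinearSyzygies F) ≤ M := by
    apply Submodule.span_le.mpr
    intro ℓ hℓ
    exact hz ℓ hℓ
  have hthis : ∑ k, eval z ((Pi.single i (F j) - Pi.single j (F i) :
      Fin m → MvPolynomial (Fin (n + 1)) ℂ) k) * a k = 0 := hsub (hK i j)
  have hsum : ∑ k, eval z ((Pi.single i (F j) - Pi.single j (F i) :
      Fin m → MvPolynomial (Fin (n + 1)) ℂ) k) * a k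
      = eval z (F j) * a i - eval z (F i) * a j := by
    simp only [Pi.sub_apply, map_sub, sub_mul]
    rw [Finset.sum_sub_distrib]
    congr 1
    · rw [Finset.sum_eq_single i]
      · simp
      · intro k _ hk; simp [Pi.single_eq_of_ne hk]
      · simp
    · rw [Finset.sum_eq_single j]
      · simp
      · intro k _ hk; simp [Pi.single_eq_of_ne hk]
      · simp
  rw [hsum] at hthis
  exact sub_eq_zero.mp hthis

/-! #### Topology of the projectivization -/

noncomputable instance pSetoid (N : ℕ) : Setoid {v : Fin N → ℂ // v ≠ 0} :=
  projectivizationSetoid ℂ (Fin N → ℂ)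

/-- The quotient map onto projectivization, as a map from the subtype. -/
noncomputable def pmk {N : ℕ} (v : {v : Fin N → ℂ // v ≠ 0}) :
    Projectivization ℂ (Fin N → ℂ) :=
  Projectivization.mk ℂ v.1 v.2

lemma continuous_pmk {N : ℕ} : Continuous (pmk (N := N)) :=
  continuous_quotient_mk'

lemma isOpenMap_pmk {N : ℕ} : IsOpenMap (pmk (N := N)) := by
  intro U hU
  have hq : IsQuotientMap (Quotient.mk' :
      {v : Fin N → ℂ // v ≠ 0} → Projectivization ℂ (Fin N → ℂ)) := isQuotientMap_quotient_mk'
  refine hq.isOpen_preimage.mp ?_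
  have : (Quotient.mk' : {v : Fin N → ℂ // v ≠ 0} → Projectivization ℂ (Fin N → ℂ)) ⁻¹'
      (pmk '' U) = ⋃ c : ℂˣ, (fun v : {v : Fin N → ℂ // v ≠ 0} =>
        (⟨(c : ℂ) • v.1, smul_ne_zero c.ne_zero v.2⟩ : {v : Fin N → ℂ // v ≠ 0})) ⁻¹' U := by
    ext v
    simp only [Set.mem_preimage, Set.mem_image, Set.mem_iUnion]
    constructor
    · rintro ⟨u, hu, huv⟩
      have : pmk u = pmk v := by rw [huv]; rfl
      rw [pmk, pmk, Projectivization.mk_eq_mk_iff] at this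
      obtain ⟨c, hc⟩ := this
      refine ⟨c, ?_⟩
      have : (⟨(c : ℂ) • v.1, smul_ne_zero c.ne_zero v.2⟩ : {v : Fin N → ℂ // v ≠ 0}) = u :=
        Subtype.ext hc
      rwa [this]
    · rintro ⟨c, hc⟩
      refine ⟨_, hc, ?_⟩
      show pmk _ = pmk v
      rw [pmk, pmk, Projectivization.mk_eq_mk_iff ℂ _ _ _ v.2]
      exact ⟨c, rfl⟩
  erw [this]
  apply isOpen_iUnion
  intro c
  apply hU.preimage
  exact Continuous.subtype_mk ((continuous_subtype_val (p := fun v : Fin N → ℂ => v ≠ 0)).const_smul (c : ℂ)) _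

/-- The bilinear incidence set cut out by linear syzygies. -/
def Zset (F : Fin m → MvPolynomial (Fin (n + 1)) ℂ) :
    Set (Projectivization ℂ (Fin (n + 1) → ℂ) × Projectivization ℂ (Fin m → ℂ)) :=
  {p | ∀ (v : Fin (n + 1) → ℂ) (hv : v ≠ 0) (w : Fin m → ℂ) (hw : w ≠ 0),
    p = (Projectivization.mk ℂ v hv, Projectivization.mk ℂ w hw) →
    ∀ ℓ ∈ LinearSyzygies F, ∑ i, eval v (ℓ i) * w i = 0}

lemma isClosed_Zset (F : Fin m → MvPolynomial (Fin (n + 1)) ℂ) : IsClosed (Zset F) := by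
  rw [← isOpen_compl_iff]
  have key : (Zset F)ᶜ = (Prod.map (pmk (N := n + 1)) (pmk (N := m))) ''
      {q : {v : Fin (n + 1) → ℂ // v ≠ 0} × {w : Fin m → ℂ // w ≠ 0} |
        ∃ ℓ ∈ LinearSyzygies F, ∑ i, eval q.1.1 (ℓ i) * q.2.1 i ≠ 0} := by
    ext p
    simp only [Set.mem_compl_iff, Zset, Set.mem_setOf_eq, Set.mem_image, not_forall]
    constructor
    · rintro ⟨v, hv, w, hw, hp, ℓ, hℓ, hne⟩
      exact ⟨(⟨v, hv⟩, ⟨w, hw⟩), ⟨ℓ, hℓ, hne⟩, by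
        simp only [Prod.map, pmk]; exact hp.symm⟩
    · rintro ⟨⟨⟨v, hv⟩, ⟨w, hw⟩⟩, ⟨ℓ, hℓ, hne⟩, hq⟩
      refine ⟨v, hv, w, hw, ?_, ℓ, hℓ, hne⟩
      rw [← hq]; simp only [Prod.map, pmk]
  rw [key]
  apply (isOpenMap_pmk.prodMap isOpenMap_pmk)
  apply isOpen_iff_forall_mem_open.mpr
  rintro ⟨⟨v, hv⟩, ⟨w, hw⟩⟩ ⟨ℓ, hℓ, hne⟩
  refine ⟨{q : {v : Fin (n + 1) → ℂ // v ≠ 0} × {w : Fin m → ℂ // w ≠ 0} |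
      ∑ i, eval q.1.1 (ℓ i) * q.2.1 i ≠ 0}, fun q hq => ⟨ℓ, hℓ, hq⟩, ?_, hne⟩
  apply isOpen_ne.preimage
  apply continuous_finset_sum
  intro i _
  exact ((MvPolynomial.continuous_eval (p := ℓ i)).comp
    (continuous_subtype_val.comp continuous_fst)).mul
    ((continuous_apply i).comp (continuous_subtype_val.comp continuous_snd))

lemma graphClosure_subset_Zset (F : Fin m → MvPolynomial (Fin (n + 1)) ℂ) :
    graphClosure F ⊆ Zset F := by
  apply closure_minimal ?_ (isClosed_Zset F)
  rintro p ⟨z, hz, hp, rfl⟩ v hv w hw hpq ℓ hℓ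
  obtain ⟨hv1, hv2⟩ := Prod.ext_iff.mp hpq
  rw [Projectivization.mk_eq_mk_iff] at hv1 hv2
  obtain ⟨c, hc⟩ := hv1
  obtain ⟨e, he⟩ := hv2
  have hFe : ∀ i, w i = (e : ℂ)⁻¹ * eval z (F i) := by
    intro i
    have := congr_fun he i
    simp only [Pi.smul_apply, Phi, Units.smul_def, smul_eq_mul] at this
    rw [← this, ← mul_assoc, inv_mul_cancel₀ (Units.ne_zero e), one_mul]
  have hvz : v = (c : ℂ)⁻¹ • z := by
    rw [← hc, Units.smul_def, smul_smul, inv_mul_cancel₀ (Units.ne_zero c), one_smul]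
  have hsum : ∑ i, eval v (ℓ i) * w i
      = (c : ℂ)⁻¹ * (e : ℂ)⁻¹ * ∑ i, eval z (ℓ i) * eval z (F i) := by
    rw [Finset.mul_sum]
    apply Finset.sum_congr rfl
    intro i _
    rw [hvz, eval_smul_one (hℓ.1 i), hFe i]; ring
  rw [hsum]
  have hsyz : ∑ i, eval z (ℓ i) * eval z (F i) = 0 := by
    have := congr_arg (eval z) hℓ.2
    simpa [map_sum] using this
  rw [hsyz, mul_zero]

/-! #### Density of non-vanishing loci -/

lemma eval_comp_line {N : ℕ} (g : MvPolynomial (Fin N) ℂ) (f : Fin N → Polynomial ℂ) (t : ℂ) :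
    Polynomial.eval t (MvPolynomial.aeval f g)
      = MvPolynomial.eval (fun i => Polynomial.eval t (f i)) g := by
  induction g using MvPolynomial.induction_on with
  | C a => simp
  | add p q hp hq => simp [hp, hq]
  | mul_X p i hp => simp [hp]

lemma dense_eval_ne_zero {N : ℕ} {g : MvPolynomial (Fin N) ℂ} (hg : g ≠ 0) :
    Dense {w : Fin N → ℂ | eval w g ≠ 0} := by
  have hpt : ∃ p : Fin N → ℂ, eval p g ≠ 0 := by
    by_contra h
    push_neg at h
    exact hg (MvPolynomial.funext (fun x => by simp [h x]))
  obtain ⟨p, hp⟩ := hpt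
  rw [dense_iff_inter_open]
  rintro O hO ⟨v, hv⟩
  set φ : ℂ → (Fin N → ℂ) := fun t => v + t • (p - v) with hφ
  have hφcont : Continuous φ := by continuity
  have hφ0 : φ 0 = v := by simp [hφ]
  have hφ1 : φ 1 = p := by simp [hφ]
  set q : Polynomial ℂ := MvPolynomial.aeval
    (fun i => Polynomial.C (v i) + Polynomial.X * Polynomial.C (p i - v i)) g with hq
  have hqeval : ∀ t, Polynomial.eval t q = eval (φ t) g := by
    intro t
    rw [hq, eval_comp_line]
    have : (fun i => Polynomial.eval t
        (Polynomial.C (v i) + Polynomial.X * Polynomial.C (p i - v i))) = φ t := by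
      funext i
      simp [hφ, mul_comm]
    rw [this]
  have hqne : q ≠ 0 := by
    intro h
    apply hp
    have := hqeval 1
    rw [h] at this
    simpa [hφ1] using this.symm
  have hroots : Set.Finite {t : ℂ | Polynomial.IsRoot q t} := Polynomial.finite_setOf_isRoot hqne
  have hdense : Dense {t : ℂ | Polynomial.IsRoot q t}ᶜ := hroots.countable.dense_compl ℂ
  have hopen : IsOpen (φ ⁻¹' O) := hO.preimage hφcont
  have hne : (φ ⁻¹' O).Nonempty := ⟨0, by rw [Set.mem_preimage, hφ0]; exact hv⟩
  obtain ⟨t, htO, ht⟩ := dense_iff_inter_open.mp hdense (φ ⁻¹' O) hopen hne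
  exact ⟨φ t, htO, by simpa [hqeval] using ht⟩

/-! #### Matrices from bases and `restrictTo` -/

lemma eval_restrictTo {k : ℕ} (A : Matrix (Fin (n + 1)) (Fin k) ℂ)
    (G : MvPolynomial (Fin (n + 1)) ℂ) (w : Fin k → ℂ) :
    eval w (restrictTo A G) = eval (A.mulVec w) G := by
  rw [restrictTo]
  induction G using MvPolynomial.induction_on with
  | C a => simp
  | add p q hp hq => rw [map_add, map_add, map_add, hp, hq]
  | mul_X p i hp =>
      rw [map_mul, map_mul, map_mul, hp, aeval_X, eval_X]
      congr 1
      simp [Matrix.mulVec, dotProduct]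

lemma restrictTo_isHomogeneous {k : ℕ} (A : Matrix (Fin (n + 1)) (Fin k) ℂ)
    {G : MvPolynomial (Fin (n + 1)) ℂ} (hG : G.IsHomogeneous d) :
    (restrictTo A G).IsHomogeneous d := by
  have := hG.aeval (fun j => ∑ b, MvPolynomial.C (A j b) * MvPolynomial.X b) (n := 1) ?_
  · simpa [restrictTo] using this
  · intro i
    apply MvPolynomial.IsHomogeneous.sum
    intro b _
    exact isHomogeneous_C_mul_X _ _

/-- The matrix of a basis of a subspace of `ℂ^{n+1}`. -/
noncomputable def basisMatrix {k : ℕ} (W : Submodule ℂ (Fin (n + 1) → ℂ))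
    (B : Module.Basis (Fin k) ℂ W) : Matrix (Fin (n + 1)) (Fin k) ℂ :=
  fun r b => ((B b : Fin (n + 1) → ℂ)) r

lemma basisMatrix_mulVec {k : ℕ} (W : Submodule ℂ (Fin (n + 1) → ℂ))
    (B : Module.Basis (Fin k) ℂ W) (w : Fin k → ℂ) :
    (basisMatrix W B).mulVec w = ((∑ b, w b • B b : W) : Fin (n + 1) → ℂ) := by
  have hco : ((∑ b, w b • B b : W) : Fin (n + 1) → ℂ)
      = ∑ b, w b • ((B b : W) : Fin (n + 1) → ℂ) := by
    have := map_sum W.subtype (fun b => w b • B b) Finset.univ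
    simpa using this
  rw [hco]
  funext r
  simp [Matrix.mulVec, dotProduct, basisMatrix, Finset.sum_apply, mul_comm]

lemma basisMatrix_mulVec_mem {k : ℕ} (W : Submodule ℂ (Fin (n + 1) → ℂ))
    (B : Module.Basis (Fin k) ℂ W) (w : Fin k → ℂ) :
    (basisMatrix W B).mulVec w ∈ W := by
  rw [basisMatrix_mulVec]
  exact Submodule.coe_mem _

lemma basisMatrix_injective {k : ℕ} (W : Submodule ℂ (Fin (n + 1) → ℂ))
    (B : Module.Basis (Fin k) ℂ W) : Function.Injective (basisMatrix W B).mulVec := by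
  intro w w' h
  rw [basisMatrix_mulVec, basisMatrix_mulVec] at h
  have h2 : (∑ b, w b • B b : W) = (∑ b, w' b • B b : W) := Subtype.ext h
  have h3 : ∑ b, (w b - w' b) • B b = (0 : W) := by
    rw [show (0 : W) = (∑ b, w b • B b) - (∑ b, w' b • B b) by rw [h2, sub_self]]
    rw [← Finset.sum_sub_distrib]
    apply Finset.sum_congr rfl
    intro b _
    exact sub_smul (w b) (w' b) (B b)
  have h4 := Fintype.linearIndependent_iff.mp B.linearIndependent _ h3
  funext b
  exact sub_eq_zero.mp (h4 b)

lemma basisMatrix_surj {k : ℕ} (W : Submodule ℂ (Fin (n + 1) → ℂ))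
    (B : Module.Basis (Fin k) ℂ W) {v : Fin (n + 1) → ℂ} (hv : v ∈ W) :
    ∃ w : Fin k → ℂ, (basisMatrix W B).mulVec w = v := by
  refine ⟨fun b => B.repr ⟨v, hv⟩ b, ?_⟩
  rw [basisMatrix_mulVec]
  have := B.sum_repr ⟨v, hv⟩
  rw [this]

end Aux

theorem stmt9 (F : Fin m → MvPolynomial (Fin (n + 1)) ℂ)
    (hdeg : ∀ i, (F i).IsHomogeneous d)
    (hK : SatisfiesK F)
    (hnoline : ContainsNoLine F) :
    ∀ a : Projectivization ℂ (Fin m → ℂ),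
      (∃ p ∈ graphClosure F, p.2 = a) →
      ∃ (k : ℕ) (A : Matrix (Fin (n + 1)) (Fin (k + 1)) ℂ),
        Function.Injective A.mulVec ∧
        -- the fiber of `φ̃` over `a` is exactly `ℙᵏ × {a}`, mapping isomorphically
        -- to the linear subspace `ℙᵏ ⊆ ℙⁿ` parametrized by `A`:
        {p | p ∈ graphClosure F ∧ p.2 = a} =
          {p | p.2 = a ∧ ∃ (w : Fin (k + 1) → ℂ) (hw : A.mulVec w ≠ 0),
            p.1 = Projectivization.mk ℂ (A.mulVec w) hw} ∧
        -- and either `k = 0`, or `ℙᵏ ∩ X` is a degree-`d` hypersurface in `ℙᵏ`: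
        (k = 0 ∨ ∃ G : MvPolynomial (Fin (k + 1)) ℂ, G.IsHomogeneous d ∧ G ≠ 0 ∧
          ∀ i, ∃ c : ℂ, restrictTo A (F i) = MvPolynomial.C c * G) := by
  rintro a ⟨p₀, hp₀, hp₀a⟩
  classical
  set ar : Fin m → ℂ := a.rep with har_def
  have har : ar ≠ 0 := a.rep_nonzero
  set W : Submodule ℂ (Fin (n + 1) → ℂ) := Wsub F ar with hW_def
  -- every fiber point has representative in W
  have hfib : ∀ p : Projectivization ℂ (Fin (n + 1) → ℂ) × Projectivization ℂ (Fin m → ℂ),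
      p ∈ graphClosure F → p.2 = a → p.1.rep ∈ W := by
    intro p hp hpa ℓ hℓ
    have hZ := graphClosure_subset_Zset F hp
    refine hZ p.1.rep p.1.rep_nonzero ar har ?_ ℓ hℓ
    have h1 : p.1 = Projectivization.mk ℂ p.1.rep p.1.rep_nonzero := (Projectivization.mk_rep _).symm
    have h2 : p.2 = Projectivization.mk ℂ ar har := by
      rw [hpa]
      exact (Projectivization.mk_rep a).symm
    exact Prod.ext h1 h2
  have hv₀W : p₀.1.rep ∈ W := hfib p₀ hp₀ hp₀a
  have hv₀ : p₀.1.rep ≠ 0 := p₀.1.rep_nonzero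
  -- W is positive-dimensional
  have hpos : 0 < Module.finrank ℂ W := by
    rw [Module.finrank_pos_iff_exists_ne_zero]
    exact ⟨⟨p₀.1.rep, hv₀W⟩, by simp [Submodule.mk_eq_zero, hv₀]⟩
  -- set up the basis matrix
  obtain ⟨k, hk⟩ : ∃ k, Module.finrank ℂ W = k + 1 :=
    ⟨Module.finrank ℂ W - 1, (Nat.succ_pred_eq_of_pos hpos).symm⟩
  set B : Module.Basis (Fin (k + 1)) ℂ W := (Module.finBasis ℂ W).reindex (finCongr hk) with hB_def
  set A : Matrix (Fin (n + 1)) (Fin (k + 1)) ℂ := basisMatrix W B with hA_def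
  have hAinj : Function.Injective A.mulVec := basisMatrix_injective W B
  have hAmem : ∀ w, A.mulVec w ∈ W := basisMatrix_mulVec_mem W B
  have hAsurj : ∀ v ∈ W, ∃ w, A.mulVec w = v := fun v hv => basisMatrix_surj W B hv
  have hAne : ∀ {w : Fin (k + 1) → ℂ}, w ≠ 0 → A.mulVec w ≠ 0 := by
    intro w hw h0
    exact hw (hAinj (by rw [h0, Matrix.mulVec_zero]))
  have hAne' : ∀ {w : Fin (k + 1) → ℂ}, A.mulVec w ≠ 0 → w ≠ 0 := by
    intro w hw h0
    rw [h0, Matrix.mulVec_zero] at hw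
    exact hw rfl
  -- the forward inclusion of the fiber description, valid in all cases
  have hforward : {p | p ∈ graphClosure F ∧ p.2 = a} ⊆
      {p | p.2 = a ∧ ∃ (w : Fin (k + 1) → ℂ) (hw : A.mulVec w ≠ 0),
        p.1 = Projectivization.mk ℂ (A.mulVec w) hw} := by
    rintro p ⟨hp, hpa⟩
    refine ⟨hpa, ?_⟩
    obtain ⟨w, hwv⟩ := hAsurj p.1.rep (hfib p hp hpa)
    have hw0 : A.mulVec w ≠ 0 := by rw [hwv]; exact p.1.rep_nonzero
    refine ⟨w, hw0, ?_⟩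
    have : Projectivization.mk ℂ (A.mulVec w) hw0
        = Projectivization.mk ℂ p.1.rep p.1.rep_nonzero := by
      congr 1
    rw [this, Projectivization.mk_rep]
  by_cases hcase : ∀ z ∈ W, ∀ i, eval z (F i) = 0
  · -- Case 2: `W` lies in the cone over `X`; then `k = 0` by the no-line hypothesis
    have hk0 : k = 0 := by
      by_contra hkne
      apply hnoline
      have h2le : (1 : ℕ) ≤ k := Nat.one_le_iff_ne_zero.mpr hkne
      set emb : Fin 2 → Fin (k + 1) := fun s => ⟨s.val, by omega⟩ with hemb
      have hembinj : Function.Injective emb := by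
        intro s t hst
        have hv := congr_arg Fin.val hst
        exact Fin.val_injective hv
      set A2 : Matrix (Fin (n + 1)) (Fin 2) ℂ :=
        fun r s => ((B (emb s) : W) : Fin (n + 1) → ℂ) r with hA2
      have hA2mul : ∀ u : Fin 2 → ℂ, A2.mulVec u
          = ((u 0 • B (emb 0) + u 1 • B (emb 1) : W) : Fin (n + 1) → ℂ) := by
        intro u
        funext r
        simp only [Matrix.mulVec, dotProduct, Fin.sum_univ_two, A2]
        simp only [Submodule.coe_add, Submodule.coe_smul, Pi.add_apply, Pi.smul_apply,
          smul_eq_mul]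
        ring
      refine ⟨A2, ?_, ?_⟩
      · intro u u' huu
        rw [hA2mul, hA2mul] at huu
        have h2 : (u 0 • B (emb 0) + u 1 • B (emb 1) : W)
            = (u' 0 • B (emb 0) + u' 1 • B (emb 1) : W) := Subtype.ext huu
        have h3 : ∑ s : Fin 2, (u s - u' s) • B (emb s) = (0 : W) := by
          rw [Fin.sum_univ_two]
          rw [show (0 : W) = (u 0 • B (emb 0) + u 1 • B (emb 1))
            - (u' 0 • B (emb 0) + u' 1 • B (emb 1)) by rw [h2, sub_self]]
          module
        have hli : LinearIndependent ℂ (fun s : Fin 2 => B (emb s)) :=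
          B.linearIndependent.comp emb hembinj
        have h4 := Fintype.linearIndependent_iff.mp hli _ h3
        funext s
        exact sub_eq_zero.mp (h4 s)
      · intro u
        intro i
        apply hcase
        rw [hA2mul]
        exact Submodule.coe_mem _
    subst hk0
    refine ⟨0, A, hAinj, ?_, Or.inl rfl⟩
    apply Set.Subset.antisymm hforward
    -- backward inclusion: the single point of `ℙ(W)` is `p₀.1`
    rintro p ⟨hpa, w, hw, hp1⟩
    refine ⟨?_, hpa⟩
    -- identify `mk (A.mulVec w)` with `p₀.1`
    obtain ⟨w₀, hw₀v⟩ := hAsurj p₀.1.rep hv₀W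
    have hw₀0 : w₀ 0 ≠ 0 := by
      intro h0
      apply hv₀
      rw [← hw₀v]
      have : w₀ = 0 := by
        funext s
        have : s = 0 := by omega
        rw [this, h0]; rfl
      rw [this, Matrix.mulVec_zero]
    have hwne : w 0 ≠ 0 := by
      intro h0
      apply hw
      have : w = 0 := by
        funext s
        have : s = 0 := by omega
        rw [this, h0]; rfl
      rw [this, Matrix.mulVec_zero]
    have hone : ∀ u : Fin 1 → ℂ, A.mulVec u = u 0 • ((B 0 : W) : Fin (n + 1) → ℂ) := by
      intro u
      rw [basisMatrix_mulVec, show (∑ b, u b • B b : W) = u 0 • B 0 from Fin.sum_univ_one _]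
      exact Submodule.coe_smul _ _
    have hprop : A.mulVec w = (w 0 / w₀ 0) • A.mulVec w₀ := by
      rw [hone, hone, smul_smul, div_mul_cancel₀ _ hw₀0]
    have hmkeq : Projectivization.mk ℂ (A.mulVec w) hw = p₀.1 := by
      rw [show A.mulVec w₀ = p₀.1.rep from hw₀v] at hprop
      rw [show Projectivization.mk ℂ (A.mulVec w) hw
          = Projectivization.mk ℂ p₀.1.rep p₀.1.rep_nonzero from ?_]
      · exact Projectivization.mk_rep _
      · rw [Projectivization.mk_eq_mk_iff']
        exact ⟨w 0 / w₀ 0, hprop.symm⟩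
    have hpp₀ : p = p₀ := by
      apply Prod.ext
      · rw [hp1, hmkeq]
      · rw [hpa, ← hp₀a]
    rw [hpp₀]
    exact hp₀
  · -- Case 1: some `F i` does not vanish identically on `W`
    push_neg at hcase
    obtain ⟨z, hzW, i₁, hzi⟩ := hcase
    obtain ⟨j₀, hj₀⟩ : ∃ j₀, ar j₀ ≠ 0 := by
      by_contra h
      push_neg at h
      exact har (funext fun j => h j)
    have hzj₀ : eval z (F j₀) ≠ 0 := by
      have hkey := key_prop hK hzW i₁ j₀
      -- eval z (F j₀) * ar i₁ = eval z (F i₁) * ar j₀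
      intro h0
      rw [h0, zero_mul] at hkey
      exact (mul_ne_zero hzi hj₀) hkey.symm
    set g : MvPolynomial (Fin (k + 1)) ℂ := restrictTo A (F j₀) with hg_def
    have hgne : g ≠ 0 := by
      obtain ⟨wz, hwz⟩ := hAsurj z hzW
      intro h0
      apply hzj₀
      have := eval_restrictTo A (F j₀) wz
      rw [← hg_def, h0, hwz] at this
      simpa using this.symm
    -- proportionality of all F i on W
    have hFprop : ∀ y ∈ W, ∀ i, eval y (F i) = (ar i / ar j₀) * eval y (F j₀) := by
      intro y hy i
      have hkey := key_prop hK hy i j₀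
      -- eval y (F j₀) * ar i = eval y (F i) * ar j₀
      rw [div_mul_eq_mul_div, eq_div_iff hj₀]
      linear_combination -hkey
    -- lower bound: all of `ℙ(W) × {a}` is in the graph closure
    have hlower : ∀ (w : Fin (k + 1) → ℂ) (hw : A.mulVec w ≠ 0),
        ((Projectivization.mk ℂ (A.mulVec w) hw, a) :
          Projectivization ℂ (Fin (n + 1) → ℂ) × Projectivization ℂ (Fin m → ℂ))
          ∈ graphClosure F := by
      intro w hw
      set T := {u : Fin (k + 1) → ℂ // u ≠ 0}
      set h : T → Projectivization ℂ (Fin (n + 1) → ℂ) × Projectivization ℂ (Fin m → ℂ) :=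
        fun u => (Projectivization.mk ℂ (A.mulVec u.1) (hAne u.2), a) with hh_def
      have hmv : Continuous (fun u : Fin (k + 1) → ℂ => A.mulVec u) := by
        have hc : Continuous (A.mulVecLin) := LinearMap.continuous_of_finiteDimensional _
        have heq : (fun u : Fin (k + 1) → ℂ => A.mulVec u) = ⇑A.mulVecLin := by
          funext u
          rw [Matrix.mulVecLin_apply]
        rw [heq]
        exact hc
      have hcont : Continuous h := by
        have h1 : Continuous (fun u : T => (⟨A.mulVec u.1, hAne u.2⟩ :
            {v : Fin (n + 1) → ℂ // v ≠ 0})) :=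
          Continuous.subtype_mk (hmv.comp continuous_subtype_val) _
        have h2 : Continuous (fun u : T => pmk ⟨A.mulVec u.1, hAne u.2⟩) :=
          (continuous_pmk (N := n + 1)).comp h1
        exact Continuous.prodMk h2 continuous_const
      set U' : Set T := {u : T | eval u.1 g ≠ 0} with hU'_def
      have hU'dense : Dense U' := by
        intro x
        rw [mem_closure_iff]
        intro o ho hxo
        obtain ⟨O, hO, rfl⟩ := isOpen_induced_iff.mp ho
        have hOne : (O ∩ {u : Fin (k + 1) → ℂ | u ≠ 0}).Nonempty := ⟨x.1, hxo, x.2⟩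
        have hOopen : IsOpen (O ∩ {u : Fin (k + 1) → ℂ | u ≠ 0}) :=
          hO.inter isOpen_compl_singleton
        obtain ⟨y, ⟨hyO, hy0⟩, hyg⟩ :=
          dense_iff_inter_open.mp (dense_eval_ne_zero hgne) _ hOopen hOne
        exact ⟨⟨y, hy0⟩, hyO, hyg⟩
      have himg : h '' U' ⊆ {p | ∃ (z : Fin (n + 1) → ℂ) (hz : z ≠ 0) (hp : Phi F z ≠ 0),
          p = (Projectivization.mk ℂ z hz, Projectivization.mk ℂ (Phi F z) hp)} := by
        rintro p ⟨u, hu, rfl⟩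
        set z' := A.mulVec u.1 with hz'_def
        have hz'W : z' ∈ W := hAmem u.1
        have hz'0 : z' ≠ 0 := hAne u.2
        have hz'j₀ : eval z' (F j₀) ≠ 0 := by
          have := eval_restrictTo A (F j₀) u.1
          rw [← hg_def] at this
          rw [← this]
          exact hu
        set c : ℂ := eval z' (F j₀) / ar j₀ with hc_def
        have hc0 : c ≠ 0 := div_ne_zero hz'j₀ hj₀
        have hPhi : Phi F z' = c • ar := by
          funext i
          simp only [Phi, Pi.smul_apply, smul_eq_mul, hc_def]
          rw [hFprop z' hz'W i]
          ring
        have hPhine : Phi F z' ≠ 0 := by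
          rw [hPhi]
          exact smul_ne_zero hc0 har
        refine ⟨z', hz'0, hPhine, ?_⟩
        apply Prod.ext
        · rfl
        · show a = Projectivization.mk ℂ (Phi F z') hPhine
          have : Projectivization.mk ℂ (Phi F z') hPhine = Projectivization.mk ℂ ar har := by
            rw [Projectivization.mk_eq_mk_iff']
            exact ⟨c, by rw [hPhi]⟩
          rw [this]
          exact (Projectivization.mk_rep a).symm
      have hx : (⟨w, hAne' hw⟩ : T) ∈ closure U' := hU'dense _
      have : h ⟨w, hAne' hw⟩ ∈ closure (h '' U') := by
        apply image_closure_subset_closure_image hcont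
        exact ⟨⟨w, hAne' hw⟩, hx, rfl⟩
      have hsub : closure (h '' U') ⊆ graphClosure F := closure_mono himg
      exact hsub this
    refine ⟨k, A, hAinj, ?_, Or.inr ⟨g, restrictTo_isHomogeneous A (hdeg j₀), hgne, ?_⟩⟩
    · apply Set.Subset.antisymm hforward
      rintro p ⟨hpa, w, hw, hp1⟩
      refine ⟨?_, hpa⟩
      have := hlower w hw
      have hpp : p = (Projectivization.mk ℂ (A.mulVec w) hw, a) := Prod.ext hp1 hpa
      rw [hpp]
      exact this
    · intro i
      refine ⟨ar i / ar j₀, ?_⟩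
      apply MvPolynomial.funext
      intro x
      rw [eval_restrictTo, map_mul, eval_C, hg_def, eval_restrictTo]
      exact hFprop (A.mulVec x) (hAmem x) i
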